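/- Let a and n be positive integers with n ≥ ⌈log₂ a⌉ + 1, and suppose f(n,a) < f(n+1,a). Then every union-closed family F of subsets of [n+1] in which every element lies in at most a sets and with |F| = f(n+1,a) (i.e., every optimal family for f(n+1,a)) has the property that every element e ∈ [n+1] is a twin difference of at least two pairs of sets, i.e., |{S ∈ F : e ∉ S and S ∪ {e} ∈ F}| ≥ 2. -/

import Mathlib

/-- A family of sets is union-closed if it contains the union of any two of its sets. -/
def UnionClosed (F : Finset (Finset ℕ)) : Prop :=
  ∀ S ∈ F, ∀ T ∈ F, S ∪ T ∈ F

/-- `F` is a family of subsets of `[n] = {0, …, n-1}` (modeled as `Finset.range n`). -/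
def FamilyOn (n : ℕ) (F : Finset (Finset ℕ)) : Prop :=
  ∀ S ∈ F, S ⊆ Finset.range n

/-- The degree of an element `e`: the number of sets of `F` containing `e`. -/
def degOf (F : Finset (Finset ℕ)) (e : ℕ) : ℕ :=
  (F.filter (fun S => e ∈ S)).card

/-- `franklF n a` is the maximum cardinality of a nonempty union-closed family of subsets
of `[n]` in which every element of `[n]` belongs to at most `a` sets. -/
noncomputable def franklF (n a : ℕ) : ℕ :=
  sSup {m | ∃ F : Finset (Finset ℕ), UnionClosed F ∧ FamilyOn n F ∧ F.Nonempty ∧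
    (∀ e ∈ Finset.range n, degOf F e ≤ a) ∧ F.card = m}

/-- `franklG n m` is the minimum, over union-closed families of subsets of `[n]` with
exactly `m` sets, of the maximum degree `max_{e ∈ [n]} |{S ∈ F : e ∈ S}|`. -/
noncomputable def franklG (n m : ℕ) : ℕ :=
  sInf {a | ∃ F : Finset (Finset ℕ), UnionClosed F ∧ FamilyOn n F ∧ F.card = m ∧
    (Finset.range n).sup (degOf F) = a}

/-- The number of twin pairs with twin difference `e`: sets `S ∈ F` with `e ∉ S`
and `S ∪ {e} ∈ F`. -/
def twinCount (F : Finset (Finset ℕ)) (e : ℕ) : ℕ :=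
  (F.filter (fun S => e ∉ S ∧ insert e S ∈ F)).card

/-- `e` is a non-trivial twin difference in `F` (as a family of subsets of `[n]`):
there is `S ∈ F` with `e ∉ S`, `S ∪ {e} ∈ F` and `S ∪ {e} ≠ [n]`. -/
def NonTrivialTwinDiff (n : ℕ) (F : Finset (Finset ℕ)) (e : ℕ) : Prop :=
  ∃ S ∈ F, e ∉ S ∧ insert e S ∈ F ∧ insert e S ≠ Finset.range n

/-- `franklFt n a`: maximum cardinality of a union-closed family of subsets of `[n]`
where every element of `[n]` lies in at most `a` sets and every element of `[n]` is a
non-trivial twin difference. -/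
noncomputable def franklFt (n a : ℕ) : ℕ :=
  sSup {m | ∃ F : Finset (Finset ℕ), UnionClosed F ∧ FamilyOn n F ∧
    (∀ e ∈ Finset.range n, degOf F e ≤ a) ∧
    (∀ e ∈ Finset.range n, NonTrivialTwinDiff n F e) ∧ F.card = m}

/-- `franklGt n m`: minimum of the maximum degree over union-closed families of subsets
of `[n]` with exactly `m` sets in which every element of `[n]` is a non-trivial twin
difference. -/
noncomputable def franklGt (n m : ℕ) : ℕ :=
  sInf {a | ∃ F : Finset (Finset ℕ), UnionClosed F ∧ FamilyOn n F ∧ F.card = m ∧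
    (∀ e ∈ Finset.range n, NonTrivialTwinDiff n F e) ∧
    (Finset.range n).sup (degOf F) = a}

/-!
Relabel so that `e = n` and erase `n` from every set. The resulting family `F'` on `[n]` is
union-closed with degrees at most `a`, so `|F'| ≤ f(n,a) < |F|`; since erasing `n` merges only
twin pairs for `n`, `F` has such a pair. If it had just one, `(T, T ∪ {n})`, union-closedness
would force every set of `F` avoiding `n` into `T`, and every degree of `F'` would drop below `a`.
As `a ≤ 2 ^ (n - 1)`, `F'` is then not the whole power set of `[n]`, so it can be enlarged by one
set while staying union-closed with degrees at most `a`, contradicting `|F'| ≥ |F| - 1 ≥ f(n,a)`.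
-/

open Finset

lemma card_le_franklF {n a : ℕ} {F : Finset (Finset ℕ)} (hF : UnionClosed F) (hFam : FamilyOn n F)
    (hne : F.Nonempty) (hdeg : ∀ x ∈ range n, degOf F x ≤ a) : F.card ≤ franklF n a := by
  refine le_csSup ⟨2 ^ n, ?_⟩ ⟨F, hF, hFam, hne, hdeg, rfl⟩
  rintro _ ⟨G, -, hGFam, -, -, rfl⟩
  simpa using card_le_card (fun S hS => mem_powerset.2 (hGFam S hS) : G ⊆ (range n).powerset)

lemma degOf_mono {F G : Finset (Finset ℕ)} (h : F ⊆ G) (x : ℕ) : degOf F x ≤ degOf G x :=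
  card_le_card (filter_subset_filter _ h)

lemma degOf_insert_le (Y : Finset ℕ) (F : Finset (Finset ℕ)) (x : ℕ) :
    degOf (insert Y F) x ≤ degOf F x + 1 := by
  unfold degOf
  rw [filter_insert]
  split_ifs
  · exact card_insert_le _ _
  · exact Nat.le_succ _

lemma le_degOf_powerset {U : Finset ℕ} {x : ℕ} (hx : x ∈ U) :
    2 ^ (U.card - 1) ≤ degOf U.powerset x := by
  rw [← card_erase_of_mem hx, ← card_powerset]
  refine card_le_card_of_injOn (insert x) (fun S hS => ?_) ?_
  · rw [mem_coe, mem_powerset] at hS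
    exact mem_filter.2 ⟨mem_powerset.2 (insert_subset hx (hS.trans (erase_subset x U))),
      mem_insert_self x S⟩
  · intro S hS T hT hST
    rw [mem_coe, mem_powerset] at hS hT
    rw [← erase_insert (notMem_mono hS (notMem_erase x U)),
      ← erase_insert (notMem_mono hT (notMem_erase x U))]
    exact congrArg (·.erase x) hST

section Relabel

def relabel (σ : Equiv.Perm ℕ) (F : Finset (Finset ℕ)) : Finset (Finset ℕ) :=
  F.map σ.finsetCongr.toEmbedding

variable (σ : Equiv.Perm ℕ) {F : Finset (Finset ℕ)}

lemma mem_relabel {S : Finset ℕ} : S ∈ relabel σ F ↔ ∃ T ∈ F, T.map σ.toEmbedding = S := by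
  rw [relabel, mem_map]
  rfl

lemma map_mem_relabel {S : Finset ℕ} : S.map σ.toEmbedding ∈ relabel σ F ↔ S ∈ F :=
  mem_map' σ.finsetCongr.toEmbedding

lemma card_relabel : (relabel σ F).card = F.card := card_map _

lemma UnionClosed.relabel (hF : UnionClosed F) : UnionClosed (relabel σ F) := by
  intro _ hS' _ hT'
  obtain ⟨S, hS, rfl⟩ := (mem_relabel σ).1 hS'
  obtain ⟨T, hT, rfl⟩ := (mem_relabel σ).1 hT'
  exact (mem_relabel σ).2 ⟨S ∪ T, hF S hS T hT, map_union _ _⟩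

lemma FamilyOn.relabel {m : ℕ} (hF : FamilyOn m F) (hσ : ∀ x < m, σ x < m) :
    FamilyOn m (relabel σ F) := by
  intro _ hS' y hy
  obtain ⟨S, hS, rfl⟩ := (mem_relabel σ).1 hS'
  obtain ⟨x, hx, rfl⟩ := mem_map.1 hy
  exact mem_range.2 (hσ x (mem_range.1 (hF S hS hx)))

lemma degOf_relabel (x : ℕ) : degOf (relabel σ F) (σ x) = degOf F x := by
  simp [degOf, relabel, filter_map, Function.comp_def]

lemma twinCount_relabel (e : ℕ) : twinCount (relabel σ F) (σ e) = twinCount F e := by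
  rw [twinCount, twinCount, relabel, filter_map, card_map]
  congr 2 with S
  simp only [Function.comp_apply, Equiv.coe_toEmbedding, Equiv.finsetCongr_apply]
  rw [← Equiv.coe_toEmbedding, mem_map', ← map_insert]
  exact and_congr_right' (map_mem_relabel σ)

end Relabel

section Erase

variable {F : Finset (Finset ℕ)} {e : ℕ}

lemma UnionClosed.image_erase (hF : UnionClosed F) (e : ℕ) :
    UnionClosed (F.image (·.erase e)) := by
  rintro _ hS' _ hT'
  obtain ⟨S, hS, rfl⟩ := mem_image.1 hS'
  obtain ⟨T, hT, rfl⟩ := mem_image.1 hT'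
  rw [← erase_union_distrib]
  exact mem_image_of_mem _ (hF S hS T hT)

lemma FamilyOn.image_erase {n : ℕ} (hF : FamilyOn (n + 1) F) :
    FamilyOn n (F.image (·.erase n)) := by
  rintro _ hS'
  obtain ⟨S, hS, rfl⟩ := mem_image.1 hS'
  intro x hx
  have := mem_range.1 (hF S hS (mem_of_mem_erase hx))
  exact mem_range.2 (lt_of_le_of_ne (Nat.lt_succ_iff.1 this) (ne_of_mem_erase hx))

lemma filter_mem_image_erase {x : ℕ} (hx : x ≠ e) :
    (F.image (·.erase e)).filter (x ∈ ·) = (F.filter (x ∈ ·)).image (·.erase e) := by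
  ext Y
  simp only [mem_filter, mem_image]
  constructor
  · rintro ⟨⟨S, hS, rfl⟩, hxS⟩
    exact ⟨S, ⟨hS, mem_of_mem_erase hxS⟩, rfl⟩
  · rintro ⟨S, ⟨hS, hxS⟩, rfl⟩
    exact ⟨⟨S, hS, rfl⟩, mem_erase.2 ⟨hx, hxS⟩⟩

lemma degOf_image_erase_le {x : ℕ} (hx : x ≠ e) :
    degOf (F.image (·.erase e)) x ≤ degOf F x := by
  rw [degOf, filter_mem_image_erase hx]
  exact card_image_le

-- Erasing `e` merges exactly the twin pairs for `e`.
lemma card_le_card_image_erase_add_twinCount (F : Finset (Finset ℕ)) (e : ℕ) :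
    F.card ≤ (F.image (·.erase e)).card + twinCount F e := by
  set F₀ := F.filter (e ∉ ·)
  set E := (F.filter (e ∈ ·)).image (·.erase e)
  have hE : E.card = (F.filter (e ∈ ·)).card :=
    card_image_of_injOn fun S hS T hT => erase_injOn' e (mem_filter.1 hS).2 (mem_filter.1 hT).2
  have hunion : F₀ ∪ E ⊆ F.image (·.erase e) := by
    refine union_subset (fun S hS => ?_) (image_subset_image (filter_subset _ _))
    exact mem_image.2 ⟨S, (mem_filter.1 hS).1, erase_eq_of_notMem (mem_filter.1 hS).2⟩
  have hinter : F₀ ∩ E ⊆ F.filter (fun S => e ∉ S ∧ insert e S ∈ F) := by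
    intro S hS
    obtain ⟨hS₀, hSE⟩ := mem_inter.1 hS
    obtain ⟨T, hT, rfl⟩ := mem_image.1 hSE
    obtain ⟨hTF, heT⟩ := mem_filter.1 hT
    exact mem_filter.2 ⟨(mem_filter.1 hS₀).1, notMem_erase e T, by rwa [insert_erase heT]⟩
  calc F.card = F₀.card + E.card := by
        rw [hE, add_comm]; exact (card_filter_add_card_filter_not _).symm
    _ = (F₀ ∪ E).card + (F₀ ∩ E).card := (card_union_add_card_inter F₀ E).symm
    _ ≤ _ := add_le_add (card_le_card hunion) (card_le_card hinter)

lemma UnionClosed.subset_of_twinCount_le_one (hF : UnionClosed F) (ht : twinCount F e ≤ 1)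
    {S T : Finset ℕ} (hT : T ∈ F) (heT : e ∉ T) (hTe : insert e T ∈ F) (hS : S ∈ F)
    (heS : e ∉ S) : S ⊆ T := by
  have hST : S ∪ T = T := by
    refine card_le_one.1 ht _ (mem_filter.2 ⟨hF S hS T hT, ?_, ?_⟩) _ (mem_filter.2 ⟨hT, heT, hTe⟩)
    · simp [heS, heT]
    · rw [← union_insert]; exact hF S hS _ hTe
  exact hST ▸ subset_union_left

-- With a single twin pair `(T, T ∪ {e})`, erasing `e` merges these two sets, which contain
-- every `x ∈ T`; and every set containing some `x ∉ T` also contains `e`.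
lemma degOf_image_erase_lt (hF : UnionClosed F) (ht : twinCount F e = 1) {x a : ℕ} (hx : x ≠ e)
    (hxa : degOf F x ≤ a) (hea : degOf F e ≤ a) : degOf (F.image (·.erase e)) x < a := by
  obtain ⟨T, hT⟩ := card_eq_one.1 ht
  obtain ⟨hTF, heT, hTe⟩ := mem_filter.1 (hT ▸ mem_singleton_self T)
  have hTne : insert e T ≠ T := fun h => heT (h ▸ mem_insert_self e T)
  by_cases hxT : x ∈ T
  · have hsub : (F.filter (x ∈ ·)).image (·.erase e) ⊆
        ((F.filter (x ∈ ·)).erase (insert e T)).image (·.erase e) := by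
      intro Y hY
      obtain ⟨S, hS, rfl⟩ := mem_image.1 hY
      by_cases hSe : S = insert e T
      · refine mem_image.2 ⟨T, mem_erase.2 ⟨hTne.symm, mem_filter.2 ⟨hTF, hxT⟩⟩, ?_⟩
        rw [hSe, erase_insert heT, erase_eq_of_notMem heT]
      · exact mem_image_of_mem _ (mem_erase.2 ⟨hSe, hS⟩)
    calc degOf (F.image (·.erase e)) x
        = ((F.filter (x ∈ ·)).image (·.erase e)).card := by rw [degOf, filter_mem_image_erase hx]
      _ ≤ ((F.filter (x ∈ ·)).erase (insert e T)).card := (card_le_card hsub).trans card_image_le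
      _ < degOf F x := card_erase_lt_of_mem (mem_filter.2 ⟨hTe, mem_insert_of_mem hxT⟩)
      _ ≤ a := hxa
  · have hsub : F.filter (x ∈ ·) ⊆ (F.filter (e ∈ ·)).erase (insert e T) := by
      intro S hS
      obtain ⟨hSF, hxS⟩ := mem_filter.1 hS
      have heS : e ∈ S := by
        by_contra heS
        exact hxT (hF.subset_of_twinCount_le_one ht.le hTF heT hTe hSF heS hxS)
      refine mem_erase.2 ⟨?_, mem_filter.2 ⟨hSF, heS⟩⟩
      rintro rfl
      exact (mem_insert.1 hxS).elim hx hxT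
    calc degOf (F.image (·.erase e)) x
        ≤ degOf F x := degOf_image_erase_le hx
      _ ≤ ((F.filter (e ∈ ·)).erase (insert e T)).card := card_le_card hsub
      _ < degOf F e := card_erase_lt_of_mem (mem_filter.2 ⟨hTe, mem_insert_self e T⟩)
      _ ≤ a := hea

end Erase

-- A largest missing subset `Y` of `[n]` can be added: every `S ∪ Y ⊇ Y` is either in `F`
-- or, being missing and at least as large as `Y`, equal to `Y`.
lemma UnionClosed.exists_insert {n : ℕ} {F : Finset (Finset ℕ)} (hF : UnionClosed F)
    (hFam : FamilyOn n F) (hmiss : ∃ Y ⊆ range n, Y ∉ F) :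
    ∃ Y ⊆ range n, Y ∉ F ∧ UnionClosed (insert Y F) := by
  set D := (range n).powerset.filter (· ∉ F)
  obtain ⟨Y, hYD, hYmax⟩ := exists_max_image D card <| by
    obtain ⟨Y, hYn, hYF⟩ := hmiss
    exact ⟨Y, mem_filter.2 ⟨mem_powerset.2 hYn, hYF⟩⟩
  obtain ⟨hYn, hYF⟩ := mem_filter.1 hYD
  have hSY : ∀ S ∈ F, S ∪ Y ∈ insert Y F := by
    intro S hS
    by_cases hSYF : S ∪ Y ∈ F
    · exact mem_insert_of_mem hSYF
    · have hD : S ∪ Y ∈ D :=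
        mem_filter.2 ⟨mem_powerset.2 (union_subset (hFam S hS) (mem_powerset.1 hYn)), hSYF⟩
      rw [← eq_of_subset_of_card_le subset_union_right (hYmax _ hD)]
      exact mem_insert_self Y F
  refine ⟨Y, mem_powerset.1 hYn, hYF, ?_⟩
  intro S hS T hT
  rcases mem_insert.1 hS with rfl | hSF <;> rcases mem_insert.1 hT with rfl | hTF
  · rw [union_self]; exact mem_insert_self _ _
  · rw [union_comm]; exact hSY T hTF
  · exact hSY S hSF
  · exact mem_insert_of_mem (hF S hSF T hTF)

-- The full power set of `[n]` has degrees `2 ^ (n - 1) ≥ a`, so `F` misses some subset of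
-- `[n]`, and adding it keeps all degrees at most `a`.
lemma card_lt_franklF {n a : ℕ} {F : Finset (Finset ℕ)} (hF : UnionClosed F)
    (hFam : FamilyOn n F) (hn : 0 < n) (ha : a ≤ 2 ^ (n - 1))
    (hdeg : ∀ x ∈ range n, degOf F x < a) : F.card < franklF n a := by
  have hmiss : ∃ Y ⊆ range n, Y ∉ F := by
    by_contra! hfull
    have h0 : 0 ∈ range n := mem_range.2 hn
    have := (le_degOf_powerset h0).trans (degOf_mono (fun Y hY => hfull Y (mem_powerset.1 hY)) 0)
    rw [card_range] at this
    exact absurd (hdeg 0 h0) (by omega)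
  obtain ⟨Y, hYn, hYF, hYUC⟩ := hF.exists_insert hFam hmiss
  have hYFam : FamilyOn n (insert Y F) := by
    intro S hS
    rcases mem_insert.1 hS with rfl | hS
    exacts [hYn, hFam S hS]
  have := card_le_franklF hYUC hYFam (insert_nonempty Y F)
    fun x hx => (degOf_insert_le Y F x).trans (hdeg x hx)
  rwa [card_insert_of_notMem hYF, Nat.add_one_le_iff] at this

theorem two_le_twinCount_of_franklF_lt {n a : ℕ} {F : Finset (Finset ℕ)} (hF : UnionClosed F)
    (hFam : FamilyOn (n + 1) F) (hdeg : ∀ x ∈ range (n + 1), degOf F x ≤ a) (hn : 0 < n)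
    (ha : a ≤ 2 ^ (n - 1)) (hlt : franklF n a < F.card) : 2 ≤ twinCount F n := by
  have hcount := card_le_card_image_erase_add_twinCount F n
  have hrange (x : ℕ) (hx : x ∈ range n) : x ≠ n ∧ x ∈ range (n + 1) := by
    have := mem_range.1 hx
    exact ⟨this.ne, mem_range.2 (by omega)⟩
  have hle : (F.image (·.erase n)).card ≤ franklF n a := by
    refine card_le_franklF (hF.image_erase n) hFam.image_erase ?_ fun x hx => ?_
    · exact (card_pos.1 (by omega)).image _
    · exact (degOf_image_erase_le (hrange x hx).1).trans (hdeg x (hrange x hx).2)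
  by_contra! ht
  have ht1 : twinCount F n = 1 := by omega
  have hlt' := card_lt_franklF (hF.image_erase n) hFam.image_erase hn ha fun x hx =>
    degOf_image_erase_lt hF ht1 (hrange x hx).1 (hdeg x (hrange x hx).2)
      (hdeg n (self_mem_range_succ n))
  omega

theorem two_twins_of_f_increase_general (a n : ℕ)
    (hlog : Nat.clog 2 a + 1 ≤ n) (hlt : franklF n a < franklF (n + 1) a)
    (F : Finset (Finset ℕ)) (hUC : UnionClosed F) (hFam : FamilyOn (n + 1) F)
    (hdeg : ∀ e ∈ Finset.range (n + 1), degOf F e ≤ a)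
    (hopt : F.card = franklF (n + 1) a) :
    ∀ e ∈ Finset.range (n + 1), 2 ≤ twinCount F e := by
  intro e he
  have ha : a ≤ 2 ^ (n - 1) :=
    (Nat.le_pow_clog one_lt_two a).trans (Nat.pow_le_pow_right two_pos (by omega))
  set σ := Equiv.swap e n
  have hσ : ∀ x < n + 1, σ x < n + 1 := by
    intro x hx
    have := mem_range.1 he
    simp only [σ, Equiv.swap_apply_def]
    split_ifs <;> omega
  have hdegσ : ∀ x ∈ range (n + 1), degOf (relabel σ F) x ≤ a := by
    intro x hx
    rw [← Equiv.swap_apply_self e n x, degOf_relabel]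
    exact hdeg _ (mem_range.2 (hσ x (mem_range.1 hx)))
  have key := two_le_twinCount_of_franklF_lt (hUC.relabel σ) (hFam.relabel σ hσ) hdegσ
    (by omega) ha (by rwa [card_relabel, hopt])
  rwa [← Equiv.swap_apply_left e n, twinCount_relabel] at key

/-- If `f(n,a) < f(n+1,a)` (with `a, n` positive and `n ≥ ⌈log₂ a⌉ + 1`), then every
element of `[n+1]` is a twin difference of at least two pairs of sets in every optimal
family for `f(n+1,a)`. -/
theorem two_twins_of_f_increase (a n : ℕ) (ha : 0 < a) (hn : 0 < n)
    (hlog : Nat.clog 2 a + 1 ≤ n) (hlt : franklF n a < franklF (n + 1) a)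
    (F : Finset (Finset ℕ)) (hUC : UnionClosed F) (hFam : FamilyOn (n + 1) F)
    (hdeg : ∀ e ∈ Finset.range (n + 1), degOf F e ≤ a)
    (hopt : F.card = franklF (n + 1) a) :
    ∀ e ∈ Finset.range (n + 1), 2 ≤ twinCount F e :=
  two_twins_of_f_increase_general a n hlog hlt F hUC hFam hdeg hopt
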